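/- Graph-theoretic version of Lemma 4.1(b): let G be a connected finite graph and τ : G′ → G a graph contraction (quotient collapsing trees of contracted weight-0 vertices) such that G has a single vertex of positive weight (irreducible case). Then any two subgraphs of G′ each containing a vertex of positive weight or a cycle must share a vertex; i.e., no two subgraphs of positive genus have finite (empty) intersection. -/
import Mathlib


/-- A finite weighted multigraph: the weighted dual graph of a nodal curve.
Vertices are irreducible components (weight = geometric genus), edges are nodes. -/
structure WGraph where
  verts : Finset ℕ
  edges : Multiset (Sym2 ℕ)
  weight : ℕ → ℕ
  wf : ∀ e ∈ edges, ∀ v ∈ e, v ∈ verts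

/-- Reachability using a multiset of edges. -/
def Reach (E : Multiset (Sym2 ℕ)) : ℕ → ℕ → Prop :=
  Relation.ReflTransGen (fun a b => s(a, b) ∈ E)

/-- The vertex set `V` is connected using the edges `E`. -/
def ConnOn (V : Finset ℕ) (E : Multiset (Sym2 ℕ)) : Prop :=
  ∀ a ∈ V, ∀ b ∈ V, Reach E a b

/-- The graph is connected. -/
def Connected (G : WGraph) : Prop := G.verts.Nonempty ∧ ConnOn G.verts G.edges

/-- One contraction step: contracting a weight-0 vertex of valence 1 or 2. -/
def ContractStep (G H : WGraph) : Prop :=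
  ∃ v ∈ G.verts, G.weight v = 0 ∧ H.verts = G.verts.erase v ∧ H.weight = G.weight ∧
    ((∃ a, a ≠ v ∧ G.edges = s(v, a) ::ₘ H.edges ∧ ∀ e ∈ H.edges, v ∉ e) ∨
     (∃ a b rest, a ≠ v ∧ b ≠ v ∧ G.edges = s(v, a) ::ₘ s(v, b) ::ₘ rest ∧
        H.edges = s(a, b) ::ₘ rest ∧ ∀ e ∈ rest, v ∉ e))

/-- Stable equivalence: `G' ≻ G` iff `G` is obtained from `G'` by a finite
sequence of contraction steps. -/
def StablyEquiv (G' G : WGraph) : Prop :=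
  Relation.ReflTransGen ContractStep G' G

/-- A subgraph of a weighted graph. -/
structure Subgraph (G : WGraph) where
  verts : Finset ℕ
  edges : Multiset (Sym2 ℕ)
  verts_sub : verts ⊆ G.verts
  edges_sub : edges ≤ G.edges
  wf : ∀ e ∈ edges, ∀ v ∈ e, v ∈ verts

/-- `(V, E)` contains a cycle: it has a nonempty connected subgraph with at
least as many edges as vertices. -/
def HasCycle (V : Finset ℕ) (E : Multiset (Sym2 ℕ)) : Prop :=
  ∃ W ⊆ V, ∃ F ≤ E, W.Nonempty ∧ (∀ e ∈ F, ∀ v ∈ e, v ∈ W) ∧ ConnOn W F ∧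
    W.card ≤ Multiset.card F

/-- A subgraph has positive genus: it contains a vertex of positive weight or a
cycle (equivalently `Σ_{v∈H} g(v) + b₁(H) ≥ 1`). -/
def PositiveGenus {G : WGraph} (H : Subgraph G) : Prop :=
  (∃ v ∈ H.verts, 1 ≤ G.weight v) ∨ HasCycle H.verts H.edges
/-- Positive-genus data relative to a graph, abstracted to a vertex set. -/
def Good (G : WGraph) (V : Finset ℕ) : Prop :=
  (∃ v ∈ V, v ∈ G.verts ∧ 1 ≤ G.weight v) ∨
  (∃ W ⊆ V, ∃ F ≤ G.edges, W.Nonempty ∧ (∀ e ∈ F, ∀ x ∈ e, x ∈ W) ∧ ConnOn W F ∧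
    W.card ≤ Multiset.card F)

lemma reach_map {F F' : Multiset (Sym2 ℕ)} {v x₀ : ℕ} (_hx : x₀ ≠ v)
    (_hnoloop : s(v,v) ∉ F)
    (hstep : ∀ w, w ≠ v → s(v,w) ∈ F → w = x₀ ∨ s(x₀,w) ∈ F')
    (hkeep : ∀ p q, p ≠ v → q ≠ v → s(p,q) ∈ F → s(p,q) ∈ F') :
    ∀ {p q}, Reach F p q →
      Reach F' (if p = v then x₀ else p) (if q = v then x₀ else q) := by
  intro p q h
  induction h with
  | refl => exact .refl
  | @tail b c _ hbc ih =>
    by_cases hb : b = v <;> by_cases hc : c = v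
    · simpa [hb, hc] using ih
    · rw [hb] at hbc
      rcases hstep c hc hbc with h1 | h1
      · simpa [hb, hc, h1] using ih
      · refine ih.tail ?_
        simpa [hb, hc] using h1
    · rw [hc, Sym2.eq_swap] at hbc
      rcases hstep b hb hbc with h1 | h1
      · simpa [hb, hc, h1] using ih
      · refine ih.tail ?_
        rw [Sym2.eq_swap] at h1
        simpa [hb, hc] using h1
    · refine ih.tail ?_
      simpa [hb, hc] using hkeep b c hb hc hbc

lemma exists_edge_of_mem_cycle {W : Finset ℕ} {F : Multiset (Sym2 ℕ)} {v : ℕ}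
    (hwf : ∀ e ∈ F, ∀ x ∈ e, x ∈ W) (hconn : ConnOn W F)
    (hcard : W.card ≤ Multiset.card F) (hv : v ∈ W) : ∃ e ∈ F, v ∈ e := by
  by_contra h
  push_neg at h
  have hall : ∀ b ∈ W, b = v := by
    intro b hb
    rcases (hconn v hv b hb).cases_head with h1 | ⟨c, hc, _⟩
    · exact h1.symm
    · exact absurd (Sym2.mem_mk_left v c) (h _ hc)
  have hW : W = {v} := Finset.eq_singleton_iff_unique_mem.2 ⟨hv, hall⟩
  have hF : F = 0 := by
    rw [Multiset.eq_zero_iff_forall_notMem]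
    intro e he
    induction e using Sym2.ind with
    | _ x y =>
      have hx : x ∈ W := hwf _ he x (Sym2.mem_mk_left x y)
      rw [hW, Finset.mem_singleton] at hx
      subst hx
      exact h _ he (Sym2.mem_mk_left _ _)
  rw [hW, hF] at hcard
  simp at hcard

lemma le_of_no_v {v : ℕ} {F M N : Multiset (Sym2 ℕ)} (hFM : F ≤ M)
    (hMN : ∀ e : Sym2 ℕ, v ∉ e → M.count e ≤ N.count e)
    (hF : ∀ e ∈ F, v ∉ e) : F ≤ N := by
  rw [Multiset.le_iff_count]
  intro e
  by_cases hv : v ∈ e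
  · have : e ∉ F := fun hc => hF e hc hv
    simp [Multiset.count_eq_zero_of_notMem this]
  · exact le_trans (Multiset.le_iff_count.1 hFM e) (hMN e hv)
lemma cycle_erase_leaf {W : Finset ℕ} {F : Multiset (Sym2 ℕ)} {v x₀ : ℕ}
    (hx : x₀ ≠ v) (hvW : v ∈ W)
    (hwf : ∀ e ∈ F, ∀ x ∈ e, x ∈ W) (hconn : ConnOn W F)
    (hcard : W.card ≤ Multiset.card F)
    (hFv : F.filter (fun e => v ∈ e) = {s(v, x₀)}) :
    (W.erase v).Nonempty ∧
    (∀ e ∈ F.filter (fun e => v ∉ e), ∀ x ∈ e, x ∈ W.erase v) ∧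
    ConnOn (W.erase v) (F.filter (fun e => v ∉ e)) ∧
    (W.erase v).card ≤ Multiset.card (F.filter (fun e => v ∉ e)) := by
  have hvx₀F : s(v, x₀) ∈ F := by
    have : s(v, x₀) ∈ F.filter (fun e => v ∈ e) := by
      rw [hFv]; exact Multiset.mem_singleton_self _
    exact (Multiset.mem_filter.1 this).1
  have hx₀W : x₀ ∈ W := hwf _ hvx₀F x₀ (Sym2.mem_mk_right _ _)
  have hwf' : ∀ e ∈ F.filter (fun e => v ∉ e), ∀ x ∈ e, x ∈ W.erase v := by
    intro e he x hxe
    obtain ⟨heF, hve⟩ := Multiset.mem_filter.1 he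
    exact Finset.mem_erase.2 ⟨fun h => hve (h ▸ hxe), hwf e heF x hxe⟩
  refine ⟨⟨x₀, Finset.mem_erase.2 ⟨hx, hx₀W⟩⟩, hwf', ?_, ?_⟩
  · intro p hp q hq
    obtain ⟨hpv, hpW⟩ := Finset.mem_erase.1 hp
    obtain ⟨hqv, hqW⟩ := Finset.mem_erase.1 hq
    have hstep : ∀ w, w ≠ v → s(v,w) ∈ F → w = x₀ ∨ s(x₀,w) ∈ F.filter (fun e => v ∉ e) := by
      intro w _ hw
      left
      have : s(v,w) ∈ F.filter (fun e => v ∈ e) :=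
        Multiset.mem_filter.2 ⟨hw, Sym2.mem_mk_left _ _⟩
      rw [hFv, Multiset.mem_singleton] at this
      exact Sym2.congr_right.1 this
    have hnoloop : s(v,v) ∉ F := by
      intro hvv
      have : s(v,v) ∈ F.filter (fun e => v ∈ e) :=
        Multiset.mem_filter.2 ⟨hvv, Sym2.mem_mk_left _ _⟩
      rw [hFv, Multiset.mem_singleton] at this
      exact hx (Sym2.congr_right.1 this).symm
    have hkeep : ∀ p q, p ≠ v → q ≠ v → s(p,q) ∈ F → s(p,q) ∈ F.filter (fun e => v ∉ e) := by
      intro p q hpv hqv h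
      refine Multiset.mem_filter.2 ⟨h, ?_⟩
      rw [Sym2.mem_iff]
      push_neg
      exact ⟨fun h' => hpv h'.symm, fun h' => hqv h'.symm⟩
    have := reach_map hx hnoloop hstep hkeep (hconn p hpW q hqW)
    simpa [hpv, hqv] using this
  · have hsplit : F.filter (fun e => v ∈ e) + F.filter (fun e => v ∉ e) = F :=
      Multiset.filter_add_not _ _
    have hc : Multiset.card (F.filter (fun e => v ∈ e)) +
        Multiset.card (F.filter (fun e => v ∉ e)) = Multiset.card F := by
      rw [← Multiset.card_add, hsplit]
    rw [hFv] at hc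
    simp only [Multiset.card_singleton] at hc
    rw [Finset.card_erase_of_mem hvW]
    omega
lemma count_cons_vnot {v a : ℕ} {e : Sym2 ℕ} (hve : v ∉ e) (E : Multiset (Sym2 ℕ)) :
    (s(v,a) ::ₘ E).count e = E.count e := by
  rw [Multiset.count_cons_of_ne]
  rintro rfl
  exact hve (Sym2.mem_mk_left _ _)

lemma good_step {G H : WGraph} (hCH : ContractStep G H) {V : Finset ℕ}
    (hg : Good G V) : ∃ V' ⊆ V, Good H V' := by
  obtain ⟨v, hvG, hw0, hHverts, hHw, hcase⟩ := hCH
  refine ⟨V.erase v, Finset.erase_subset _ _, ?_⟩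
  rcases hg with ⟨w, hwV, hwG, hw1⟩ | ⟨W, hWV, F, hFE, hWne, hwf, hconn, hcard⟩
  · left
    have hwv : w ≠ v := by rintro rfl; rw [hw0] at hw1; omega
    exact ⟨w, Finset.mem_erase.2 ⟨hwv, hwV⟩,
      by rw [hHverts]; exact Finset.mem_erase.2 ⟨hwv, hwG⟩, by rw [hHw]; exact hw1⟩
  right
  by_cases hvW : v ∈ W
  case neg =>
    have hFv : ∀ e ∈ F, v ∉ e := fun e he hv => hvW (hwf e he v hv)
    have hWsub : W ⊆ V.erase v := fun x hx =>
      Finset.mem_erase.2 ⟨fun h => hvW (h ▸ hx), hWV hx⟩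
    refine ⟨W, hWsub, F, ?_, hWne, hwf, hconn, hcard⟩
    rcases hcase with ⟨a, hav, hGE, hE⟩ | ⟨a, b, R, hav, hbv, hGE, hHE, hR⟩
    · refine le_of_no_v hFE (fun e hve => ?_) hFv
      rw [hGE, count_cons_vnot hve]
    · refine le_of_no_v hFE (fun e hve => ?_) hFv
      rw [hGE, hHE, count_cons_vnot hve, count_cons_vnot hve]
      exact Multiset.count_le_count_cons _ _ _
  case pos =>
  obtain ⟨e₀, he₀F, hve₀⟩ := exists_edge_of_mem_cycle hwf hconn hcard hvW
  have he₀Fv : e₀ ∈ F.filter (fun e => v ∈ e) := Multiset.mem_filter.2 ⟨he₀F, hve₀⟩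
  have hsplit : F.filter (fun e => v ∈ e) + F.filter (fun e => v ∉ e) = F :=
    Multiset.filter_add_not _ _
  rcases hcase with ⟨a, hav, hGE, hE⟩ | ⟨a, b, R, hav, hbv, hGE, hHE, hR⟩
  · -- valence 1
    have hall : ∀ e ∈ F, v ∈ e → e = s(v, a) := by
      intro e heF hve
      have : e ∈ G.edges := Multiset.mem_of_le hFE heF
      rw [hGE, Multiset.mem_cons] at this
      rcases this with h | h
      · exact h
      · exact absurd hve (hE e h)
    have hFv1 : F.filter (fun e => v ∈ e) = {s(v, a)} := by
      have hrep : F.filter (fun e => v ∈ e) =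
          Multiset.replicate (Multiset.card (F.filter (fun e => v ∈ e))) s(v, a) :=
        Multiset.eq_replicate.2 ⟨rfl, fun e he => by
          obtain ⟨h1, h2⟩ := Multiset.mem_filter.1 he; exact hall e h1 h2⟩
      have hle : Multiset.replicate (Multiset.card (F.filter (fun e => v ∈ e))) s(v, a)
          ≤ G.edges := le_trans (hrep ▸ Multiset.filter_le _ F) hFE
      have hcount : Multiset.card (F.filter (fun e => v ∈ e)) ≤ G.edges.count s(v, a) :=
        Multiset.le_count_iff_replicate_le.2 hle
      have hGc : G.edges.count s(v, a) = 1 := by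
        rw [hGE, Multiset.count_cons_self,
          Multiset.count_eq_zero_of_notMem (fun h => hE _ h (Sym2.mem_mk_left _ _))]
      have hpos : 0 < Multiset.card (F.filter (fun e => v ∈ e)) :=
        Multiset.card_pos.2 fun h => by simp [h] at he₀Fv
      rw [hGc] at hcount
      rw [hrep]
      have : Multiset.card (F.filter (fun e => v ∈ e)) = 1 := le_antisymm hcount hpos
      rw [this, Multiset.replicate_one]
    obtain ⟨hne, hwf', hconn', hcard'⟩ :=
      cycle_erase_leaf hav hvW hwf hconn hcard hFv1
    refine ⟨W.erase v, ?_, F.filter (fun e => v ∉ e), ?_, hne, hwf', hconn', hcard'⟩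
    · exact fun x hx => Finset.mem_erase.2
        ⟨(Finset.mem_erase.1 hx).1, hWV (Finset.mem_erase.1 hx).2⟩
    · refine le_of_no_v (le_trans (Multiset.filter_le _ F) hFE) (fun e hve => ?_)
        (fun e he => (Multiset.mem_filter.1 he).2)
      rw [hGE, count_cons_vnot hve]
  · -- valence 2
    have hall : ∀ e ∈ F, v ∈ e → e = s(v, a) ∨ e = s(v, b) := by
      intro e heF hve
      have : e ∈ G.edges := Multiset.mem_of_le hFE heF
      rw [hGE, Multiset.mem_cons, Multiset.mem_cons] at this
      rcases this with h | h | h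
      · exact Or.inl h
      · exact Or.inr h
      · exact absurd hve (hR e h)
    have hGf : Multiset.card (G.edges.filter (fun e => v ∈ e)) = 2 := by
      rw [hGE, Multiset.filter_cons_of_pos (p := fun e => v ∈ e) _ (Sym2.mem_mk_left _ _),
        Multiset.filter_cons_of_pos (p := fun e => v ∈ e) _ (Sym2.mem_mk_left _ _),
        Multiset.filter_eq_nil.2 hR]
      rfl
    have hk2 : Multiset.card (F.filter (fun e => v ∈ e)) ≤ 2 := by
      rw [← hGf]
      exact Multiset.card_le_card (Multiset.filter_le_filter _ hFE)
    have hk1 : 1 ≤ Multiset.card (F.filter (fun e => v ∈ e)) :=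
      Multiset.card_pos.2 fun h => by simp [h] at he₀Fv
    rcases (by omega : Multiset.card (F.filter (fun e => v ∈ e)) = 1 ∨
        Multiset.card (F.filter (fun e => v ∈ e)) = 2) with hk | hk
    · -- v is a leaf of the cycle subgraph
      obtain ⟨x, hxeq⟩ := Multiset.card_eq_one.1 hk
      obtain ⟨x₀, hx₀v, hFv1⟩ : ∃ x₀, x₀ ≠ v ∧
          F.filter (fun e => v ∈ e) = {s(v, x₀)} := by
        rw [hxeq, Multiset.mem_singleton] at he₀Fv
        rcases hall e₀ he₀F hve₀ with h | h
        · exact ⟨a, hav, by rw [hxeq, ← he₀Fv, h]⟩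
        · exact ⟨b, hbv, by rw [hxeq, ← he₀Fv, h]⟩
      obtain ⟨hne, hwf', hconn', hcard'⟩ :=
        cycle_erase_leaf hx₀v hvW hwf hconn hcard hFv1
      refine ⟨W.erase v, ?_, F.filter (fun e => v ∉ e), ?_, hne, hwf', hconn', hcard'⟩
      · exact fun x hx => Finset.mem_erase.2
          ⟨(Finset.mem_erase.1 hx).1, hWV (Finset.mem_erase.1 hx).2⟩
      · refine le_of_no_v (le_trans (Multiset.filter_le _ F) hFE) (fun e hve => ?_)
          (fun e he => (Multiset.mem_filter.1 he).2)
        rw [hGE, hHE, count_cons_vnot hve, count_cons_vnot hve]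
        exact Multiset.count_le_count_cons _ _ _
    · -- v has two incident edges in the cycle subgraph
      have hmemW : a ∈ W ∧ b ∈ W := by
        by_cases ha : s(v,a) ∈ F.filter (fun e => v ∈ e) <;>
          by_cases hb' : s(v,b) ∈ F.filter (fun e => v ∈ e)
        · exact ⟨hwf _ (Multiset.mem_filter.1 ha).1 a (Sym2.mem_mk_right _ _),
            hwf _ (Multiset.mem_filter.1 hb').1 b (Sym2.mem_mk_right _ _)⟩
        · -- all edges at v are s(v,a); forces s(v,a) = s(v,b)
          have haW : a ∈ W := hwf _ (Multiset.mem_filter.1 ha).1 a (Sym2.mem_mk_right _ _)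
          have hrep : F.filter (fun e => v ∈ e) = Multiset.replicate 2 s(v, a) := by
            rw [← hk]
            refine Multiset.eq_replicate.2 ⟨rfl, fun e he => ?_⟩
            obtain ⟨h1, h2⟩ := Multiset.mem_filter.1 he
            rcases hall e h1 h2 with h | h
            · exact h
            · exact absurd (h ▸ he) hb'
          have hcnt : 2 ≤ G.edges.count s(v, a) :=
            Multiset.le_count_iff_replicate_le.2
              (le_trans (hrep ▸ Multiset.filter_le _ F) hFE)
          have hab : s(v, a) = s(v, b) := by
            by_contra hne
            rw [hGE, Multiset.count_cons_self, Multiset.count_cons_of_ne hne,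
              Multiset.count_eq_zero_of_notMem
                (fun h => hR _ h (Sym2.mem_mk_left _ _))] at hcnt
            omega
          have : a = b := Sym2.congr_right.1 hab
          exact ⟨haW, this ▸ haW⟩
        · have hbW : b ∈ W := hwf _ (Multiset.mem_filter.1 hb').1 b (Sym2.mem_mk_right _ _)
          have hrep : F.filter (fun e => v ∈ e) = Multiset.replicate 2 s(v, b) := by
            rw [← hk]
            refine Multiset.eq_replicate.2 ⟨rfl, fun e he => ?_⟩
            obtain ⟨h1, h2⟩ := Multiset.mem_filter.1 he
            rcases hall e h1 h2 with h | h
            · exact absurd (h ▸ he) ha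
            · exact h
          have hcnt : 2 ≤ G.edges.count s(v, b) :=
            Multiset.le_count_iff_replicate_le.2
              (le_trans (hrep ▸ Multiset.filter_le _ F) hFE)
          have hab : s(v, b) = s(v, a) := by
            by_contra hne
            rw [hGE, Multiset.count_cons_of_ne hne, Multiset.count_cons_self,
              Multiset.count_eq_zero_of_notMem
                (fun h => hR _ h (Sym2.mem_mk_left _ _))] at hcnt
            omega
          have : b = a := Sym2.congr_right.1 hab
          exact ⟨this ▸ hbW, hbW⟩
        · rcases hall e₀ he₀F hve₀ with h | h
          · exact absurd (h ▸ he₀Fv) ha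
          · exact absurd (h ▸ he₀Fv) hb'
      obtain ⟨haW, hbW⟩ := hmemW
      have hFnR : F.filter (fun e => v ∉ e) ≤ R := by
        refine le_of_no_v (le_trans (Multiset.filter_le _ F) hFE) (fun e hve => ?_)
          (fun e he => (Multiset.mem_filter.1 he).2)
        rw [hGE, count_cons_vnot hve, count_cons_vnot hve]
      refine ⟨W.erase v, ?_, s(a, b) ::ₘ F.filter (fun e => v ∉ e), ?_,
        ⟨a, Finset.mem_erase.2 ⟨hav, haW⟩⟩, ?_, ?_, ?_⟩
      · exact fun x hx => Finset.mem_erase.2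
          ⟨(Finset.mem_erase.1 hx).1, hWV (Finset.mem_erase.1 hx).2⟩
      · rw [hHE]
        exact Multiset.cons_le_cons _ hFnR
      · intro e he x hxe
        rw [Multiset.mem_cons] at he
        rcases he with rfl | he
        · rw [Sym2.mem_iff] at hxe
          rcases hxe with rfl | rfl
          · exact Finset.mem_erase.2 ⟨hav, haW⟩
          · exact Finset.mem_erase.2 ⟨hbv, hbW⟩
        · obtain ⟨heF, hve⟩ := Multiset.mem_filter.1 he
          exact Finset.mem_erase.2 ⟨fun h => hve (h ▸ hxe), hwf e heF x hxe⟩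
      · -- connectivity
        intro p hp q hq
        obtain ⟨hpv, hpW⟩ := Finset.mem_erase.1 hp
        obtain ⟨hqv, hqW⟩ := Finset.mem_erase.1 hq
        have hstep : ∀ w, w ≠ v → s(v,w) ∈ F →
            w = a ∨ s(a,w) ∈ s(a, b) ::ₘ F.filter (fun e => v ∉ e) := by
          intro w _ hw
          rcases hall _ hw (Sym2.mem_mk_left _ _) with h | h
          · exact Or.inl (Sym2.congr_right.1 h)
          · have : w = b := Sym2.congr_right.1 h
            subst this
            exact Or.inr (Multiset.mem_cons_self _ _)
        have hnoloop : s(v,v) ∉ F := by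
          intro hvv
          rcases hall _ hvv (Sym2.mem_mk_left _ _) with h | h
          · exact hav (Sym2.congr_right.1 h).symm
          · exact hbv (Sym2.congr_right.1 h).symm
        have hkeep : ∀ p q, p ≠ v → q ≠ v → s(p,q) ∈ F →
            s(p,q) ∈ s(a, b) ::ₘ F.filter (fun e => v ∉ e) := by
          intro p q hpv hqv h
          refine Multiset.mem_cons_of_mem (Multiset.mem_filter.2 ⟨h, ?_⟩)
          rw [Sym2.mem_iff]
          push_neg
          exact ⟨fun h' => hpv h'.symm, fun h' => hqv h'.symm⟩
        have := reach_map hav hnoloop hstep hkeep (hconn p hpW q hqW)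
        simpa [hpv, hqv] using this
      · -- cardinality
        have hc : Multiset.card (F.filter (fun e => v ∈ e)) +
            Multiset.card (F.filter (fun e => v ∉ e)) = Multiset.card F := by
          rw [← Multiset.card_add, hsplit]
        rw [hk] at hc
        rw [Finset.card_erase_of_mem hvW, Multiset.card_cons]
        omega
lemma mem_of_good_base {G : WGraph} {v₀ : ℕ} (hset : G.verts = {v₀}) {V : Finset ℕ}
    (h : Good G V) : v₀ ∈ V := by
  rcases h with ⟨w, hwV, hwG, _⟩ | ⟨W, hWV, F, hFE, hWne, hwf, hconn, hcard⟩
  · rw [hset, Finset.mem_singleton] at hwG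
    exact hwG ▸ hwV
  · have hFne : F ≠ 0 := by
      rintro rfl
      simp only [Multiset.card_zero, Nat.le_zero] at hcard
      exact hWne.ne_empty (Finset.card_eq_zero.1 hcard)
    obtain ⟨e, he⟩ := Multiset.exists_mem_of_ne_zero hFne
    induction e using Sym2.ind with
    | _ x y =>
      have hxG : x ∈ G.verts := G.wf _ (Multiset.mem_of_le hFE he) x (Sym2.mem_mk_left _ _)
      rw [hset, Finset.mem_singleton] at hxG
      exact hxG ▸ hWV (hwf _ he x (Sym2.mem_mk_left _ _))

lemma good_of_pos {G : WGraph} {H : Subgraph G} (h : PositiveGenus H) :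
    Good G H.verts := by
  rcases h with ⟨v, hv, hw⟩ | ⟨W, hWsub, F, hFle, rest⟩
  · exact Or.inl ⟨v, hv, H.verts_sub hv, hw⟩
  · exact Or.inr ⟨W, hWsub, F, le_trans hFle H.edges_sub, rest⟩

lemma good_inter {G' G : WGraph} (hst : StablyEquiv G' G) {v₀ : ℕ}
    (hset : G.verts = {v₀}) :
    ∀ V₁ V₂ : Finset ℕ, Good G' V₁ → Good G' V₂ → ∃ x, x ∈ V₁ ∧ x ∈ V₂ := by
  induction hst using Relation.ReflTransGen.head_induction_on with
  | refl =>
    intro V₁ V₂ h1 h2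
    exact ⟨v₀, mem_of_good_base hset h1, mem_of_good_base hset h2⟩
  | head hab _ ih =>
    intro V₁ V₂ h1 h2
    obtain ⟨V₁', hs1, hg1⟩ := good_step hab h1
    obtain ⟨V₂', hs2, hg2⟩ := good_step hab h2
    obtain ⟨x, hx1, hx2⟩ := ih V₁' V₂' hg1 hg2
    exact ⟨x, hs1 hx1, hs2 hx2⟩

/-- Graph-theoretic version of Lemma 4.1(b): if `G'` is a connected weighted
graph stably equivalent (by contractions of weight-0 vertices of valence ≤ 2)
to a graph `G` with a single vertex, of positive weight (the irreducible case),
then no two vertex-disjoint subgraphs of `G'` can both have positive genus: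
any two subgraphs each containing a vertex of positive weight or a cycle must
share a vertex. -/
theorem no_disjoint_positive_genus_subgraphs (G' G : WGraph)
    (hconn : Connected G')
    (hst : StablyEquiv G' G)
    (hG : G.verts.card = 1)
    (hGw : ∃ v ∈ G.verts, 1 ≤ G.weight v)
    (H₁ H₂ : Subgraph G')
    (h₁ : PositiveGenus H₁) (h₂ : PositiveGenus H₂) :
    ∃ v, v ∈ H₁.verts ∧ v ∈ H₂.verts := by
  obtain ⟨v₀, hv₀G, hv₀w⟩ := hGw
  have hset : G.verts = {v₀} := by
    obtain ⟨x, hx⟩ := Finset.card_eq_one.1 hG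
    rw [hx, Finset.mem_singleton] at hv₀G
    rw [hx, hv₀G]
  exact good_inter hst hset H₁.verts H₂.verts (good_of_pos h₁) (good_of_pos h₂)
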